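/- arXiv:2306.06291 — 4 statements merged into one kernel-verified Lean document; each statement's English description precedes it below -/
import Mathlib

section
/- Fix η ∈ (0,1], a ≥ 0, s ≥ 0, and an integer d ≥ 1. For x ∈ ℝ^d with 0 ≤ x_k ≤ 1 for all k and Σ_k x_k ≤ s, define f(x) = Σ_{k=1}^d [ (min(x_k, a))·1(x_k < η) + a·1(x_k ≥ η) ]. Then the maximum of f over this domain is at most a · min( ⌈s/min(a, η)⌉, d ). -/
/-- For `η ∈ (0,1]`, `a ≥ 0`, `s ≥ 0`, and `x ∈ ℝ^d` with `0 ≤ x_k ≤ 1` and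
`Σ_k x_k ≤ s`, the function
`f(x) = Σ_k (min(x_k,a)·1(x_k < η) + a·1(x_k ≥ η))` is at most
`a · min(⌈s / min(a,η)⌉, d)`. -/
theorem f1_le_bound (η a s : ℝ) (hη0 : 0 < η) (hη1 : η ≤ 1)
    (ha : 0 ≤ a) (hs : 0 ≤ s) (d : ℕ) (hd : 1 ≤ d)
    (x : Fin d → ℝ) (hx0 : ∀ k, 0 ≤ x k) (hx1 : ∀ k, x k ≤ 1)
    (hsum : ∑ k, x k ≤ s) :
    (∑ k, if x k < η then min (x k) a else a)
      ≤ a * min ((⌈s / min a η⌉₊ : ℝ)) (d : ℝ) := by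
  rcases eq_or_lt_of_le ha with rfl | hapos
  · have : ∀ k : Fin d, (if x k < η then min (x k) 0 else 0) = 0 := by
      intro k
      split <;> simp [min_eq_right (hx0 k)]
    simp [this]
  · set m := min a η with hm
    have hm0 : 0 < m := lt_min hapos hη0
    rw [mul_min_of_nonneg _ _ ha]
    apply le_min
    · -- sum ≤ (a/m) * sum x ≤ (a/m) * s = a * (s/m) ≤ a * ⌈s/m⌉
      have h1 : ∀ k : Fin d, (if x k < η then min (x k) a else a) ≤ a / m * x k := by
        intro k
        have hma : m ≤ a := min_le_left _ _
        have hmη : m ≤ η := min_le_right _ _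
        have hk0 := hx0 k
        split
        · rcases le_total (x k) a with h | h
          · rw [min_eq_left h, ← sub_nonneg]
            have : a / m * x k - x k = (a - m) / m * x k := by field_simp
            rw [this]
            exact mul_nonneg (div_nonneg (by linarith) hm0.le) hk0
          · rw [min_eq_right h, div_mul_eq_mul_div, le_div_iff₀ hm0]
            nlinarith
        · rw [div_mul_eq_mul_div, le_div_iff₀ hm0]
          have : η ≤ x k := le_of_not_gt (by assumption)
          nlinarith
      calc (∑ k, if x k < η then min (x k) a else a)
          ≤ ∑ k, a / m * x k := Finset.sum_le_sum fun k _ => h1 k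
        _ = a / m * ∑ k, x k := by rw [Finset.mul_sum]
        _ ≤ a / m * s := by
            apply mul_le_mul_of_nonneg_left hsum
            positivity
        _ = a * (s / m) := by ring
        _ ≤ a * ⌈s / m⌉₊ := by
            apply mul_le_mul_of_nonneg_left (Nat.le_ceil _) ha
    · calc (∑ k, if x k < η then min (x k) a else a)
          ≤ ∑ _k : Fin d, a := by
            apply Finset.sum_le_sum
            intro k _
            split
            · exact min_le_right _ _
            · exact le_refl a
        _ = a * d := by simp [mul_comm]
end

section
/- Fix η ∈ (0,1], a ≥ 0, s ≥ 0, and an integer d ≥ 1. For x ∈ ℝ^d with 0 ≤ x_k ≤ 1 for all k and Σ_k x_k ≤ s, define f₂(x) = Σ_{k=1}^d [ (min(x_k, a))²·1(x_k < η) + a²·1(x_k ≥ η) ]. Then the maximum of f₂ over this domain is at most a² · min( ⌈s/min(a, η)⌉, d ). -/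
/-- For `η ∈ (0,1]`, `a ≥ 0`, `s ≥ 0`, and `x ∈ ℝ^d` with `0 ≤ x_k ≤ 1` and
`Σ_k x_k ≤ s`, the function
`f₂(x) = Σ_k ((min(x_k,a))²·1(x_k < η) + a²·1(x_k ≥ η))` is at most
`a² · min(⌈s / min(a,η)⌉, d)`. -/
theorem f2_le_bound (η a s : ℝ) (hη0 : 0 < η) (hη1 : η ≤ 1)
    (ha : 0 ≤ a) (hs : 0 ≤ s) (d : ℕ) (hd : 1 ≤ d)
    (x : Fin d → ℝ) (hx0 : ∀ k, 0 ≤ x k) (hx1 : ∀ k, x k ≤ 1)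
    (hsum : ∑ k, x k ≤ s) :
    (∑ k, if x k < η then (min (x k) a) ^ 2 else a ^ 2)
      ≤ a ^ 2 * min ((⌈s / min a η⌉₊ : ℝ)) (d : ℝ) := by
  rcases eq_or_lt_of_le ha with h0 | hapos
  · subst h0
    have hz : ∀ k : Fin d, (if x k < η then (min (x k) (0:ℝ)) ^ 2 else (0:ℝ) ^ 2) = 0 := by
      intro k
      rw [min_eq_right (hx0 k)]
      split <;> ring
    rw [Finset.sum_congr rfl (fun k _ => hz k)]
    simp
  · set m := min a η with hmdef
    have hm : 0 < m := lt_min hapos hη0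
    have hma : m ≤ a := min_le_left _ _
    have hmη : m ≤ η := min_le_right _ _
    have hterm1 : ∀ k : Fin d,
        (if x k < η then (min (x k) a) ^ 2 else a ^ 2) ≤ a ^ 2 / m * x k := by
      intro k
      rw [div_mul_eq_mul_div, le_div_iff₀ hm]
      split
      · have ht0 : 0 ≤ min (x k) a := le_min (hx0 k) ha
        have hta : min (x k) a ≤ a := min_le_right _ _
        have htx : min (x k) a ≤ x k := min_le_left _ _
        nlinarith [mul_le_mul_of_nonneg_left hma (sq_nonneg (min (x k) a)),
          mul_le_mul_of_nonneg_left htx (mul_nonneg ha ht0),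
          mul_le_mul_of_nonneg_right hta (mul_nonneg ha (hx0 k))]
      · rename_i h
        push_neg at h
        have : m ≤ x k := hmη.trans h
        nlinarith [sq_nonneg a]
    have hterm2 : ∀ k : Fin d,
        (if x k < η then (min (x k) a) ^ 2 else a ^ 2) ≤ a ^ 2 := by
      intro k
      split
      · have ht0 : 0 ≤ min (x k) a := le_min (hx0 k) ha
        have hta : min (x k) a ≤ a := min_le_right _ _
        nlinarith
      · exact le_refl _
    have hb1 : (∑ k, if x k < η then (min (x k) a) ^ 2 else a ^ 2)
        ≤ a ^ 2 * (⌈s / m⌉₊ : ℝ) := by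
      calc (∑ k, if x k < η then (min (x k) a) ^ 2 else a ^ 2)
          ≤ ∑ k, a ^ 2 / m * x k := Finset.sum_le_sum (fun k _ => hterm1 k)
        _ = a ^ 2 / m * ∑ k, x k := by rw [Finset.mul_sum]
        _ ≤ a ^ 2 / m * s := by
            apply mul_le_mul_of_nonneg_left hsum
            positivity
        _ = a ^ 2 * (s / m) := by ring
        _ ≤ a ^ 2 * (⌈s / m⌉₊ : ℝ) := by
            apply mul_le_mul_of_nonneg_left (Nat.le_ceil _) (sq_nonneg a)
    have hb2 : (∑ k, if x k < η then (min (x k) a) ^ 2 else a ^ 2)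
        ≤ a ^ 2 * (d : ℝ) := by
      calc (∑ k, if x k < η then (min (x k) a) ^ 2 else a ^ 2)
          ≤ ∑ _k : Fin d, a ^ 2 := Finset.sum_le_sum (fun k _ => hterm2 k)
        _ = (d : ℝ) * a ^ 2 := by simp [Finset.sum_const, nsmul_eq_mul]
        _ = a ^ 2 * (d : ℝ) := by ring
    rw [mul_min_of_nonneg _ _ (sq_nonneg a)]
    exact le_min hb1 hb2
end

section
/- Let {Z^ℓ}_{ℓ∈L} be independent Gaussian random variables Z^ℓ ~ N(μ^ℓ, (σ^ℓ)²), let μ ∈ ℝ, and let B = {ℓ ∈ L : μ^ℓ ≠ μ}. Suppose |B| < |L| and let G = |B|/|L| + √(δ/(|L|−|B|)) + 10^{-8}/|L| for some δ ≥ 0. If G < 1/2 − ε for some ε > 0, then with probability at least 1 − 4e^{−2δ}, |median({Z^ℓ}_{ℓ∈L}) − μ| ≤ σ̃·G·C_ε, where σ̃ = max_{ℓ ∈ L∖B} σ^ℓ and C_ε = √(2π)·exp((Φ^{-1}(1−ε))²/2) with Φ the standard normal CDF. -/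
open MeasureTheory ProbabilityTheory

/-- The median of a list of reals: the middle element of the sorted list
(the average of the two middle elements when the length is even). -/
noncomputable def listMedian (l : List ℝ) : ℝ :=
  let s := l.mergeSort (· ≤ ·)
  if l.length % 2 = 1 then s.getD (l.length / 2) 0
  else (s.getD (l.length / 2 - 1) 0 + s.getD (l.length / 2) 0) / 2

/-- The sample median of finitely many reals. -/
noncomputable def sampleMedian {ι : Type*} [Fintype ι] (f : ι → ℝ) : ℝ :=
  listMedian (Finset.univ.val.toList.map f)

/-- The cumulative distribution function of the standard normal distribution. -/
noncomputable def stdGaussianCDF (x : ℝ) : ℝ :=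
  ((gaussianReal 0 1) (Set.Iic x)).toReal

/-- The quantile function `Φ⁻¹` of the standard normal distribution. -/
noncomputable def stdGaussianQuantile (p : ℝ) : ℝ :=
  sInf {x : ℝ | p ≤ stdGaussianCDF x}

/-! If the median overshoots `μ + t`, `t = σ̃ G C_ε`, then at least `|L|/2` samples exceed `μ + t`,
hence at least `|L|/2 - |B|` of the `g = |L| - |B|` inliers do. Each inlier exceeds `μ + t` with
probability at most `1/2 - G`: the standard normal density is at least `1/C_ε = φ(Φ⁻¹(1-ε))` on
`[0, Φ⁻¹(1-ε)]`, so `Φ(G C_ε) ≥ 1/2 + G` (and beyond `Φ⁻¹(1-ε)` already `Φ ≥ 1 - ε > 1/2 + G`).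
The choice of `G` makes `|L|/2 - |B| ≥ g (1/2 - G) + √(δ g)`, so Hoeffding's inequality for the
inlier indicators bounds the probability of the overshoot by `e^{-2δ}`; the undershoot is
symmetric. -/
namespace List

variable {α : Type*} [Preorder α] [DecidableLT α] {l : List α}

theorem SortedLE.length_sub_le_countP_lt (hl : l.SortedLE) {j : ℕ} (hj : j < l.length) {c : α}
    (hc : c < l[j]) : l.length - j ≤ l.countP (c < ·) := by
  have hdrop : ∀ x ∈ l.drop j, c < x := by
    intro x hx
    obtain ⟨i, hi, rfl⟩ := List.getElem_of_mem hx
    rw [List.getElem_drop]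
    exact hc.trans_le (hl.monotone_get (show (⟨j, hj⟩ : Fin l.length) ≤ ⟨j + i, _⟩ by simp))
  calc l.length - j = (l.drop j).countP (c < ·) := by
        rw [List.countP_eq_length.2 (by simpa using hdrop), List.length_drop]
    _ ≤ l.countP (c < ·) := (List.drop_sublist j l).countP_le

theorem SortedLE.succ_le_countP_gt (hl : l.SortedLE) {j : ℕ} (hj : j < l.length) {c : α}
    (hc : l[j] < c) : j + 1 ≤ l.countP (· < c) := by
  have htake : ∀ x ∈ l.take (j + 1), x < c := by
    intro x hx
    obtain ⟨i, hi, rfl⟩ := List.getElem_of_mem hx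
    rw [List.getElem_take]
    exact (hl.monotone_get (show (⟨i, _⟩ : Fin l.length) ≤ ⟨j, hj⟩ by
      simp at hi ⊢; omega)).trans_lt hc
  calc j + 1 = (l.take (j + 1)).countP (· < c) := by
        rw [List.countP_eq_length.2 (by simpa using htake), List.length_take]; omega
    _ ≤ l.countP (· < c) := (List.take_sublist _ l).countP_le

end List

section Median

variable {l : List ℝ}

theorem listMedian_mem_Icc (hl : 0 < l.length) :
    listMedian l ∈ Set.Icc ((l.mergeSort (· ≤ ·)).getD ((l.length - 1) / 2) 0)
      ((l.mergeSort (· ≤ ·)).getD (l.length / 2) 0) := by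
  set s := l.mergeSort (· ≤ ·)
  have hlen : s.length = l.length := List.length_mergeSort l
  have hmid : s.getD ((l.length - 1) / 2) 0 ≤ s.getD (l.length / 2) 0 := by
    rw [List.getD_eq_getElem _ _ (by omega), List.getD_eq_getElem _ _ (by omega)]
    exact List.sortedLE_mergeSort.monotone_get (show (⟨_, _⟩ : Fin s.length) ≤ ⟨_, _⟩ by
      simp only [Fin.mk_le_mk]; omega)
  unfold listMedian
  split_ifs with hodd
  · rw [show (l.length - 1) / 2 = l.length / 2 by omega] at hmid ⊢
    exact ⟨le_rfl, le_rfl⟩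
  · rw [show l.length / 2 - 1 = (l.length - 1) / 2 by omega]
    constructor <;> linarith

theorem length_le_two_mul_countP_lt_of_lt_listMedian {c : ℝ} (h : c < listMedian l) :
    l.length ≤ 2 * l.countP (c < ·) := by
  obtain hl | hl := Nat.eq_zero_or_pos l.length
  · simp [hl]
  have hj : l.length / 2 < (l.mergeSort (· ≤ ·)).length := by
    rw [List.length_mergeSort]; omega
  have hc := h.trans_le (listMedian_mem_Icc hl).2
  rw [List.getD_eq_getElem _ _ hj] at hc
  have := List.sortedLE_mergeSort.length_sub_le_countP_lt hj hc
  rw [List.length_mergeSort, (List.mergeSort_perm l _).countP_eq] at this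
  omega

theorem length_le_two_mul_countP_gt_of_listMedian_lt {c : ℝ} (h : listMedian l < c) :
    l.length ≤ 2 * l.countP (· < c) := by
  obtain hl | hl := Nat.eq_zero_or_pos l.length
  · simp [hl]
  have hj : (l.length - 1) / 2 < (l.mergeSort (· ≤ ·)).length := by
    rw [List.length_mergeSort]; omega
  have hc := (listMedian_mem_Icc hl).1.trans_lt h
  rw [List.getD_eq_getElem _ _ hj] at hc
  have := List.sortedLE_mergeSort.succ_le_countP_gt hj hc
  rw [(List.mergeSort_perm l _).countP_eq] at this
  omega

end Median

section SampleMedian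

open Finset

variable {ι α : Type*} [Fintype ι]

theorem countP_map_toList_univ (f : ι → α) (p : α → Prop) [DecidablePred p] :
    ((univ.val.toList).map f).countP (fun x => decide (p x)) = #{i | p (f i)} := by
  rw [List.countP_map, show (fun x => decide (p x)) ∘ f = fun i => decide (p (f i)) from rfl,
    ← Multiset.coe_countP, Multiset.coe_toList, Multiset.countP_eq_card_filter]
  rfl

theorem length_map_toList_univ (f : ι → α) : ((univ.val.toList).map f).length = Fintype.card ι := by
  simp

theorem card_le_two_mul_card_lt_of_lt_sampleMedian {f : ι → ℝ} {c : ℝ} (h : c < sampleMedian f) :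
    Fintype.card ι ≤ 2 * #{i | c < f i} := by
  have := length_le_two_mul_countP_lt_of_lt_listMedian h
  rwa [countP_map_toList_univ, length_map_toList_univ] at this

theorem card_le_two_mul_card_gt_of_sampleMedian_lt {f : ι → ℝ} {c : ℝ} (h : sampleMedian f < c) :
    Fintype.card ι ≤ 2 * #{i | f i < c} := by
  have := length_le_two_mul_countP_gt_of_listMedian_lt h
  rwa [countP_map_toList_univ, length_map_toList_univ] at this

end SampleMedian

section Hoeffding

open MeasureTheory ProbabilityTheory Finset Real

variable {Ω ι β : Type*} [MeasurableSpace Ω] {P : Measure Ω} [IsProbabilityMeasure P]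
  [MeasurableSpace β]

theorem measureReal_add_le_card_filter_mem_le {X : ι → Ω → β} (hX : ∀ i, Measurable (X i))
    (hindep : iIndepFun X P) {S : Set β} [DecidablePred (· ∈ S)] (hS : MeasurableSet S)
    (F : Finset ι) {p r : ℝ} (hp : ∀ i ∈ F, P.real (X i ⁻¹' S) ≤ p) (hr : 0 ≤ r) :
    P.real {ω | #F * p + r ≤ #{i ∈ F | X i ω ∈ S}} ≤ exp (-2 * r ^ 2 / #F) := by
  set Y : ι → Ω → ℝ := fun i => S.indicator 1 ∘ X i
  have hYm : ∀ i, Measurable (Y i) := fun i => (measurable_const.indicator hS).comp (hX i)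
  have hY01 : ∀ i ω, Y i ω ∈ Set.Icc (0 : ℝ) 1 := fun i ω => by
    by_cases h : X i ω ∈ S <;> simp [Y, h]
  have hYmean : ∀ i, P[Y i] = P.real (X i ⁻¹' S) := fun i => by
    rw [show Y i = (X i ⁻¹' S).indicator 1 from rfl, integral_indicator_one ((hX i) hS)]
  have hsub : {ω | #F * p + r ≤ #{i ∈ F | X i ω ∈ S}}
      ⊆ {ω | r ≤ ∑ i ∈ F, (Y i ω - P[Y i])} := by
    intro ω hω
    have hcount : ∑ i ∈ F, Y i ω = #{i ∈ F | X i ω ∈ S} := by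
      simp [Y, Set.indicator_apply]
    have hmean : ∑ i ∈ F, P[Y i] ≤ #F * p := by
      rw [← nsmul_eq_mul, ← Finset.sum_const]
      exact Finset.sum_le_sum fun i hi => (hYmean i).trans_le (hp i hi)
    simp only [Set.mem_ofPred_eq, Finset.sum_sub_distrib, hcount] at hω ⊢
    linarith
  have hsubG : ∀ i ∈ F, HasSubgaussianMGF (fun ω => Y i ω - P[Y i]) (1 / 4) P := fun i _ => by
    convert hasSubgaussianMGF_of_mem_Icc (μ := P) (hYm i).aemeasurable (ae_of_all _ (hY01 i))
    norm_num
  have hindepY : iIndepFun (fun i ω => Y i ω - P[Y i]) P := by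
    set c : ι → ℝ := fun i => P[Y i]
    exact hindep.comp (fun i y => S.indicator (1 : β → ℝ) y - c i)
      fun i => (measurable_const.indicator hS).sub_const _
  calc P.real _ ≤ P.real {ω | r ≤ ∑ i ∈ F, (Y i ω - P[Y i])} := measureReal_mono hsub
    _ ≤ exp (-2 * r ^ 2 / #F) :=
      (HasSubgaussianMGF.measure_sum_ge_le_of_iIndepFun hindepY hsubG hr).trans_eq <| by
        congr 1
        simp
        ring

theorem card_filter_le_card_filter_add_card_compl [Fintype ι] [DecidableEq ι] (p : ι → Prop)
    [DecidablePred p] (F : Finset ι) : #{i | p i} ≤ #{i ∈ F | p i} + #Fᶜ :=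
  calc #{i | p i} ≤ #({i ∈ F | p i} ∪ Fᶜ) := card_le_card fun i hi => by
        by_cases hiF : i ∈ F <;> simp_all
    _ ≤ #{i ∈ F | p i} + #Fᶜ := card_union_le _ _

theorem measureReal_card_le_two_mul_card_filter_mem_le [Fintype ι] [DecidableEq ι] {X : ι → Ω → β}
    (hX : ∀ i, Measurable (X i)) (hindep : iIndepFun X P) {S : Set β} [DecidablePred (· ∈ S)]
    (hS : MeasurableSet S) (F : Finset ι) {p r : ℝ} (hp : ∀ i ∈ F, P.real (X i ⁻¹' S) ≤ p)
    (hr : 0 ≤ r) (hF : #F * p + r ≤ Fintype.card ι / 2 - #Fᶜ) :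
    P.real {ω | Fintype.card ι ≤ 2 * #{i | X i ω ∈ S}} ≤ exp (-2 * r ^ 2 / #F) := by
  refine (measureReal_mono fun ω hω => ?_).trans
    (measureReal_add_le_card_filter_mem_le hX hindep hS F hp hr)
  have hcount := card_filter_le_card_filter_add_card_compl (X · ω ∈ S) F
  have : (Fintype.card ι : ℝ) ≤ 2 * (#{i ∈ F | X i ω ∈ S} + #Fᶜ) := by
    exact_mod_cast (show Fintype.card ι ≤ _ from hω).trans (by omega)
  change (#F : ℝ) * p + r ≤ #{i ∈ F | X i ω ∈ S}
  linarith

end Hoeffding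

section StdGaussian

open MeasureTheory ProbabilityTheory Set Filter Real
open scoped Topology

/-- The constant `C_ε`. -/
noncomputable def gaussianMedianConst (ε : ℝ) : ℝ :=
  Real.sqrt (2 * Real.pi) * Real.exp ((stdGaussianQuantile (1 - ε)) ^ 2 / 2)

theorem stdGaussianCDF_eq_cdf : stdGaussianCDF = cdf (gaussianReal 0 1) := by
  ext x
  rw [cdf_eq_real]
  rfl

theorem measureReal_gaussianReal_Ioi (x : ℝ) :
    (gaussianReal 0 1).real (Ioi x) = 1 - stdGaussianCDF x := by
  rw [← compl_Iic, probReal_compl_eq_one_sub measurableSet_Iic]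
  rfl

theorem stdGaussianCDF_zero : stdGaussianCDF 0 = 1 / 2 := by
  have : NullSingletonClass (gaussianReal 0 1) := nullSingletonClass_gaussianReal one_ne_zero
  have hsymm : stdGaussianCDF 0 = (gaussianReal 0 1).real (Ioi 0) := by
    rw [measureReal_congr Ioi_ae_eq_Ici, ← neg_zero, ← gaussianReal_map_neg,
      map_measureReal_apply measurable_neg measurableSet_Ici]
    simp [stdGaussianCDF, measureReal_def]
  rw [measureReal_gaussianReal_Ioi] at hsymm
  linarith

theorem gaussianPDFReal_le_gaussianPDFReal {x y : ℝ} (h : |x| ≤ |y|) :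
    gaussianPDFReal 0 1 y ≤ gaussianPDFReal 0 1 x := by
  simp only [gaussianPDFReal_def, sub_zero]
  gcongr _ * exp (-?_ / _)
  exact sq_le_sq.2 h

theorem half_add_mul_gaussianPDFReal_le_stdGaussianCDF {x q : ℝ} (hx : 0 ≤ x) (hxq : x ≤ q) :
    1 / 2 + x * gaussianPDFReal 0 1 q ≤ stdGaussianCDF x := by
  have hsplit : stdGaussianCDF x = stdGaussianCDF 0 + (gaussianReal 0 1).real (Ioc 0 x) := by
    rw [stdGaussianCDF, ← Iic_union_Ioc_eq_Iic hx,
      measure_union (Iic_disjoint_Ioc le_rfl) measurableSet_Ioc,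
      ENNReal.toReal_add (measure_ne_top _ _) (measure_ne_top _ _)]
    rfl
  have hdensity : (gaussianReal 0 1).real (Ioc 0 x) = ∫ y in Ioc 0 x, gaussianPDFReal 0 1 y := by
    rw [measureReal_def, gaussianReal_apply_eq_integral 0 one_ne_zero,
      ENNReal.toReal_ofReal (setIntegral_nonneg measurableSet_Ioc fun y _ =>
        gaussianPDFReal_nonneg 0 1 y)]
  have hlower := setIntegral_ge_of_const_le_real (f := gaussianPDFReal 0 1)
    (c := gaussianPDFReal 0 1 q) (μ := volume) measurableSet_Ioc (by simp)
    (fun y hy => gaussianPDFReal_le_gaussianPDFReal (abs_le_abs_of_nonneg hy.1.le (hy.2.trans hxq)))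
    (integrable_gaussianPDFReal 0 1).integrableOn
  rw [Real.volume_real_Ioc_of_le hx, sub_zero] at hlower
  rw [hsplit, stdGaussianCDF_zero, hdensity]
  linarith

theorem le_stdGaussianCDF_stdGaussianQuantile {p : ℝ} (hp0 : 0 < p) (hp1 : p < 1) :
    p ≤ stdGaussianCDF (stdGaussianQuantile p) := by
  rw [stdGaussianQuantile, stdGaussianCDF_eq_cdf]
  set F := cdf (gaussianReal 0 1)
  set S := {x : ℝ | p ≤ F x}
  have hne : S.Nonempty := ((tendsto_cdf_atTop _).eventually (eventually_ge_nhds hp1)).exists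
  have hbdd : BddBelow S := by
    obtain ⟨x₀, hx₀⟩ :=
      eventually_atBot.1 ((tendsto_cdf_atBot _).eventually (eventually_lt_nhds hp0))
    exact ⟨x₀, fun x hx => le_of_not_gt fun hlt => (hx₀ x hlt.le).not_ge hx⟩
  have hright : ∀ᶠ y in 𝓝[>] sInf S, p ≤ F y := eventually_nhdsWithin_of_forall fun y hy => by
    obtain ⟨b, hbS, hby⟩ := (csInf_lt_iff hbdd hne).1 hy
    exact hbS.trans (F.mono hby.le)
  exact ge_of_tendsto
    ((F.right_continuous _).tendsto.mono_left (nhdsWithin_mono _ Ioi_subset_Ici_self)) hright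

theorem gaussianMedianConst_eq_inv_gaussianPDFReal (ε : ℝ) :
    gaussianMedianConst ε = (gaussianPDFReal 0 1 (stdGaussianQuantile (1 - ε)))⁻¹ := by
  simp [gaussianMedianConst, gaussianPDFReal_def, ← Real.exp_neg, neg_div, mul_comm]

theorem half_add_le_stdGaussianCDF {G ε : ℝ} (hG : 0 ≤ G) (hGε : G < 1 / 2 - ε) (hε : 0 < ε) :
    1 / 2 + G ≤ stdGaussianCDF (G * gaussianMedianConst ε) := by
  set q := stdGaussianQuantile (1 - ε)
  rw [gaussianMedianConst_eq_inv_gaussianPDFReal]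
  by_cases hq : G * (gaussianPDFReal 0 1 q)⁻¹ ≤ q
  · have := half_add_mul_gaussianPDFReal_le_stdGaussianCDF
      (mul_nonneg hG (inv_nonneg.2 (gaussianPDFReal_nonneg 0 1 q))) hq
    rwa [inv_mul_cancel_right₀ (gaussianPDFReal_pos 0 1 q one_ne_zero).ne'] at this
  · calc 1 / 2 + G ≤ 1 - ε := by linarith
      _ ≤ stdGaussianCDF q := le_stdGaussianCDF_stdGaussianQuantile (by linarith) (by linarith)
      _ ≤ _ := by rw [stdGaussianCDF_eq_cdf]; exact monotone_cdf _ (not_le.1 hq).le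

end StdGaussian

section GaussianTail

open MeasureTheory ProbabilityTheory Set
open scoped NNReal

theorem gaussianReal_eq_map_stdGaussian (m : ℝ) {c : ℝ} {σ : ℝ≥0} (hc : c ^ 2 = σ ^ 2) :
    gaussianReal m (σ ^ 2) = (gaussianReal 0 1).map (fun y => m + c * y) := by
  rw [show (fun y => m + c * y) = (m + ·) ∘ (c * ·) from rfl,
    ← Measure.map_map (by fun_prop) (by fun_prop), gaussianReal_map_const_mul,
    gaussianReal_map_const_add]
  congr 1
  · ring
  · ext
    simp [hc]

variable {m a : ℝ} {σ σ' : ℝ≥0}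

theorem measureReal_gaussianReal_Ioi_le (hσ : σ ≤ σ') (ha : 0 ≤ a) :
    (gaussianReal m (σ ^ 2)).real (Ioi (m + σ' * a)) ≤ (gaussianReal 0 1).real (Ioi a) := by
  rw [gaussianReal_eq_map_stdGaussian m (c := σ) rfl,
    map_measureReal_apply (by fun_prop) measurableSet_Ioi]
  refine measureReal_mono fun y (hy : m + σ' * a < m + σ * y) => show a < y from ?_
  nlinarith [σ.2, NNReal.coe_le_coe.2 hσ]

theorem measureReal_gaussianReal_Iio_le (hσ : σ ≤ σ') (ha : 0 ≤ a) :
    (gaussianReal m (σ ^ 2)).real (Iio (m - σ' * a)) ≤ (gaussianReal 0 1).real (Ioi a) := by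
  rw [gaussianReal_eq_map_stdGaussian m (c := -σ) (neg_sq _),
    map_measureReal_apply (by fun_prop) measurableSet_Iio]
  refine measureReal_mono fun y (hy : m + -σ * y < m - σ' * a) => show a < y from ?_
  nlinarith [σ.2, NNReal.coe_le_coe.2 hσ]

theorem measureReal_tails_le_of_map_eq_gaussianReal {Ω : Type*} [MeasurableSpace Ω]
    {P : Measure Ω} {X : Ω → ℝ} (hX : Measurable X) (hlaw : P.map X = gaussianReal m (σ ^ 2))
    (hσ : σ ≤ σ') {G ε : ℝ} (hG : 0 ≤ G) (hGε : G < 1 / 2 - ε) (hε : 0 < ε) :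
    P.real (X ⁻¹' Ioi (m + σ' * G * gaussianMedianConst ε)) ≤ 1 / 2 - G ∧
      P.real (X ⁻¹' Iio (m - σ' * G * gaussianMedianConst ε)) ≤ 1 / 2 - G := by
  have hΦ := half_add_le_stdGaussianCDF hG hGε hε
  have hGC : 0 ≤ G * gaussianMedianConst ε := by
    rw [gaussianMedianConst_eq_inv_gaussianPDFReal]
    exact mul_nonneg hG (inv_nonneg.2 (gaussianPDFReal_nonneg 0 1 _))
  have hupper := measureReal_gaussianReal_Ioi_le (m := m) hσ hGC
  have hlower := measureReal_gaussianReal_Iio_le (m := m) hσ hGC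
  rw [measureReal_gaussianReal_Ioi] at hupper hlower
  rw [← map_measureReal_apply hX measurableSet_Ioi, ← map_measureReal_apply hX measurableSet_Iio,
    hlaw, mul_assoc]
  constructor <;> linarith

end GaussianTail

section Assembly

open MeasureTheory Finset

theorem compl_setOf_abs_sampleMedian_sub_le_subset {Ω ι : Type*} [Fintype ι] (X : ι → Ω → ℝ)
    (c t : ℝ) :
    {ω | |sampleMedian (X · ω) - c| ≤ t}ᶜ ⊆
      {ω | Fintype.card ι ≤ 2 * #{i | X i ω ∈ Set.Ioi (c + t)}} ∪
        {ω | Fintype.card ι ≤ 2 * #{i | X i ω ∈ Set.Iio (c - t)}} := by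
  intro ω (hω : ¬|sampleMedian (X · ω) - c| ≤ t)
  rcases lt_abs.1 (not_le.1 hω) with h | h
  · exact Or.inl (card_le_two_mul_card_lt_of_lt_sampleMedian (by linarith))
  · exact Or.inr (card_le_two_mul_card_gt_of_sampleMedian_lt (by linarith))

theorem ofReal_one_sub_two_mul_le_of_compl_subset_union {Ω : Type*} [MeasurableSpace Ω]
    {P : Measure Ω} [IsProbabilityMeasure P] {A E₁ E₂ : Set Ω} {b : ℝ} (h : Aᶜ ⊆ E₁ ∪ E₂)
    (h₁ : P.real E₁ ≤ b) (h₂ : P.real E₂ ≤ b) : ENNReal.ofReal (1 - 2 * b) ≤ P A := by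
  have hcover : 1 ≤ P.real A + P.real Aᶜ := by
    simpa [Set.union_compl_self] using measureReal_union_le (μ := P) A Aᶜ
  have hcompl : P.real Aᶜ ≤ P.real E₁ + P.real E₂ :=
    (measureReal_mono h).trans (measureReal_union_le _ _)
  rw [← ofReal_measureReal]
  exact ENNReal.ofReal_le_ofReal (by linarith)

theorem sub_mul_half_sub_add_sub_mul_le {n b w η G : ℝ} (hn : 0 < n) (hb : 0 ≤ b) (hw : 0 ≤ w)
    (hη : 0 ≤ η) (hG : G = b / n + w + η / n) (hG2 : G < 1 / 2) :
    (n - b) * (1 / 2 - G) + (n - b) * w ≤ n / 2 - b := by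
  have hu : b / n * n = b := div_mul_cancel₀ _ hn.ne'
  have hu0 : 0 ≤ b / n := by positivity
  have hη0 : 0 ≤ η / n := by positivity
  have hb2 : 2 * b < n := by nlinarith
  subst hG
  nlinarith [mul_nonneg hu0 (sub_nonneg.2 (show b ≤ n - b by linarith)),
    mul_nonneg (show 0 ≤ n - b by linarith) hη0]

end Assembly

open Classical in
theorem median_gaussian_concentration_general
    {Ω : Type*} [MeasureSpace Ω] [IsProbabilityMeasure (ℙ : Measure Ω)]
    {ι : Type*} [Fintype ι]
    (Z : ι → Ω → ℝ) (hmeas : ∀ ℓ, Measurable (Z ℓ))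
    (m : ι → ℝ) (s : ι → NNReal)
    (hindep : iIndepFun Z ℙ)
    (hlaw : ∀ ℓ, Measure.map (Z ℓ) ℙ = gaussianReal (m ℓ) ((s ℓ) ^ 2))
    (μ : ℝ)
    (hB : (Finset.univ.filter fun ℓ => m ℓ ≠ μ).card < Fintype.card ι)
    (δ : ℝ) (hδ : 0 ≤ δ) (ε : ℝ) (hε : 0 < ε)
    (G : ℝ)
    (hG : G = ((Finset.univ.filter fun ℓ => m ℓ ≠ μ).card : ℝ) / Fintype.card ι
        + Real.sqrt (δ / ((Fintype.card ι : ℝ)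
            - (Finset.univ.filter fun ℓ => m ℓ ≠ μ).card))
        + (10 : ℝ) ^ (-(8 : ℤ)) / Fintype.card ι)
    (hGsmall : G < 1 / 2 - ε) :
    ENNReal.ofReal (1 - 4 * Real.exp (-2 * δ))
      ≤ ℙ {ω | |sampleMedian (fun ℓ => Z ℓ ω) - μ|
          ≤ (((Finset.univ.filter fun ℓ => m ℓ = μ).sup s : NNReal) : ℝ) * G
            * (Real.sqrt (2 * Real.pi)
              * Real.exp ((stdGaussianQuantile (1 - ε)) ^ 2 / 2))} := by
  set good := Finset.univ.filter fun ℓ => m ℓ = μ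
  set bad := Finset.univ.filter fun ℓ => m ℓ ≠ μ
  set r := (good.card : ℝ) * Real.sqrt (δ / ((Fintype.card ι : ℝ) - bad.card)) with hr
  have hcompl : goodᶜ = bad := Finset.compl_filter _
  have hcard : (good.card : ℝ) = Fintype.card ι - bad.card := by
    rw [← hcompl, Finset.card_compl]; push_cast [Finset.card_le_univ]; ring
  have hgood : (0 : ℝ) < good.card := by rw [hcard, sub_pos]; exact_mod_cast hB
  have hG0 : 0 ≤ G := by rw [hG]; positivity
  have hthr : good.card * (1 / 2 - G) + r ≤ Fintype.card ι / 2 - goodᶜ.card := by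
    rw [hcompl, hr, hcard]
    exact sub_mul_half_sub_add_sub_mul_le (by linarith) (Nat.cast_nonneg _) (Real.sqrt_nonneg _)
      (by positivity) hG (by linarith)
  have hexp : Real.exp (-2 * r ^ 2 / good.card) = Real.exp (-2 * δ) := by
    rw [hr, mul_pow, Real.sq_sqrt (div_nonneg hδ (hcard ▸ hgood.le)), ← hcard]
    field_simp
  have htail (ℓ : ι) (hℓ : ℓ ∈ good) := measureReal_tails_le_of_map_eq_gaussianReal (hmeas ℓ)
    ((hlaw ℓ).trans (by rw [(Finset.mem_filter.1 hℓ).2])) (Finset.le_sup hℓ) hG0 hGsmall hε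
  refine (ENNReal.ofReal_le_ofReal ?_).trans (ofReal_one_sub_two_mul_le_of_compl_subset_union
    (compl_setOf_abs_sampleMedian_sub_le_subset Z μ _)
    (hexp ▸ measureReal_card_le_two_mul_card_filter_mem_le hmeas hindep measurableSet_Ioi good
      (fun ℓ hℓ => (htail ℓ hℓ).1) (by positivity) hthr)
    (hexp ▸ measureReal_card_le_two_mul_card_filter_mem_le hmeas hindep measurableSet_Iio good
      (fun ℓ hℓ => (htail ℓ hℓ).2) (by positivity) hthr))
  linarith [Real.exp_pos (-2 * δ)]

open Classical in
/-- Median of independent Gaussians with outliers: if `Z^ℓ ~ N(μ^ℓ, (σ^ℓ)²)` are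
independent, `B = {ℓ : μ^ℓ ≠ μ}` with `|B| < |L|`, and
`G = |B|/|L| + √(δ/(|L|-|B|)) + 10⁻⁸/|L| < 1/2 - ε`, then with probability at
least `1 - 4 e^{-2δ}` the sample median satisfies
`|median - μ| ≤ σ̃ G C_ε` where `σ̃ = max_{ℓ ∉ B} σ^ℓ` and
`C_ε = √(2π) exp((Φ⁻¹(1-ε))²/2)`. -/
theorem median_gaussian_concentration
    {Ω : Type*} [MeasureSpace Ω] [IsProbabilityMeasure (ℙ : Measure Ω)]
    {ι : Type*} [Fintype ι] [Nonempty ι]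
    (Z : ι → Ω → ℝ) (hmeas : ∀ ℓ, Measurable (Z ℓ))
    (m : ι → ℝ) (s : ι → NNReal)
    (hindep : iIndepFun Z ℙ)
    (hlaw : ∀ ℓ, Measure.map (Z ℓ) ℙ = gaussianReal (m ℓ) ((s ℓ) ^ 2))
    (μ : ℝ)
    (hB : (Finset.univ.filter fun ℓ => m ℓ ≠ μ).card < Fintype.card ι)
    (δ : ℝ) (hδ : 0 ≤ δ) (ε : ℝ) (hε : 0 < ε)
    (G : ℝ)
    (hG : G = ((Finset.univ.filter fun ℓ => m ℓ ≠ μ).card : ℝ) / Fintype.card ι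
        + Real.sqrt (δ / ((Fintype.card ι : ℝ)
            - (Finset.univ.filter fun ℓ => m ℓ ≠ μ).card))
        + (10 : ℝ) ^ (-(8 : ℤ)) / Fintype.card ι)
    (hGsmall : G < 1 / 2 - ε) :
    ENNReal.ofReal (1 - 4 * Real.exp (-2 * δ))
      ≤ ℙ {ω | |sampleMedian (fun ℓ => Z ℓ ω) - μ|
          ≤ (((Finset.univ.filter fun ℓ => m ℓ = μ).sup s : NNReal) : ℝ) * G
            * (Real.sqrt (2 * Real.pi)
              * Real.exp ((stdGaussianQuantile (1 - ε)) ^ 2 / 2))} :=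
  median_gaussian_concentration_general Z hmeas m s hindep hlaw μ hB δ hδ ε hε G hG hGsmall
end

section
/- Let {β^m}_{m ∈ [M]} ⊂ ℝ^d, let δ^m = β^m − β⋆ for some β⋆ ∈ ℝ^d with ‖δ^m‖₀ ≤ s. Given matrices X^m ∈ ℝ^{n×d} and Y^m = X^m β^m, the multitask Dantzig selector—minimizing Σ_m ‖v^m‖₁ over (v⋆, {v^m}) subject to X^{m⊤}(X^m(v⋆ + v^m) − Y^m) = 0 for all m—recovers β^m = v̂⋆ + v̂^m for all m if and only if for all choices u^m ∈ null(X^m) (m ∈ [M]), the quantity Σ_{m=1}^M ‖δ^m + u^m − median({δ^ℓ + u^ℓ}_{ℓ∈[M]})‖₁ is uniquely minimized at u^m = 0 for all m. -/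
/-!
Feasibility of `(v⋆, v)` only says that `u^m := v⋆ + v^m - β^m` lies in `null(X^m)`, because
`Xᵀ X w = 0 ↔ X w = 0`; then `v^m = δ^m + u^m - (v⋆ - β⋆)`. For a fixed `u`, the cost
`Σ_m ‖v^m‖₁` is therefore smallest when `v⋆ - β⋆` is the coordinate-wise median of `δ + u`
(a median minimizes the total absolute deviation, as at most half of the points lie strictly on
either side of it), and that smallest cost is `F(u) = Σ_m ‖δ^m + u^m - median‖₁`. So the optimal
value of the selector is `min_u F(u)`, and all its solutions have `u = 0`, i.e. recover every
`β^m`, exactly when `u = 0` is the unique minimizer of `F`. Solutions exist because the cost is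
coercive on the closed feasible set.
-/

open Matrix

open Finset

variable {ι κ ρ : Type*}

theorem List.countP_le_of_pairwise {α : Type*} {R : α → α → Prop} {p : α → Bool}
    {l : List α} (hl : l.Pairwise R) (hp : ∀ x y, R x y → p y → p x)
    {j : ℕ} (hj : j < l.length) (hpj : ¬ p l[j]) : l.countP p ≤ j := by
  induction l generalizing j with
  | nil => simp at hj
  | cons x t ih =>
    rw [List.pairwise_cons] at hl
    cases j with
    | zero =>
      have hnone : ∀ y ∈ t, ¬ p y := fun y hy hy' => hpj (hp x y (hl.1 y hy) hy')
      simp_all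
    | succ k =>
      have hk := ih hl.2 (by simpa using hj) hpj
      rw [List.countP_cons]
      split <;> omega

theorem exists_getElem_mergeSort_le_listMedian_le {l : List ℝ} (hl : l ≠ []) :
    ∃ (i j : ℕ) (hi : i < (l.mergeSort (· ≤ ·)).length)
      (hj : j < (l.mergeSort (· ≤ ·)).length),
      (l.mergeSort (· ≤ ·))[i] ≤ listMedian l ∧ listMedian l ≤ (l.mergeSort (· ≤ ·))[j] ∧
      l.length ≤ 2 * (i + 1) ∧ 2 * j ≤ l.length := by
  have hpos : 0 < l.length := List.length_pos_iff.mpr hl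
  have hs : (l.mergeSort (· ≤ ·)).length = l.length := List.length_mergeSort l
  unfold listMedian
  dsimp only
  split_ifs with hodd
  · have h : l.length / 2 < (l.mergeSort (· ≤ ·)).length := by omega
    refine ⟨l.length / 2, l.length / 2, h, h, ?_, ?_, by omega, by omega⟩ <;>
      rw [List.getD_eq_getElem _ _ h]
  · have h₁ : l.length / 2 - 1 < (l.mergeSort (· ≤ ·)).length := by omega
    have h₂ : l.length / 2 < (l.mergeSort (· ≤ ·)).length := by omega
    have hle :
        (l.mergeSort (· ≤ ·))[l.length / 2 - 1] ≤ (l.mergeSort (· ≤ ·))[l.length / 2] :=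
      List.sortedLE_mergeSort.getElem_le_getElem_of_le (by omega)
    refine ⟨l.length / 2 - 1, l.length / 2, h₁, h₂, ?_, ?_, by omega, by omega⟩ <;>
      rw [List.getD_eq_getElem _ _ h₁, List.getD_eq_getElem _ _ h₂] <;> linarith

theorem two_mul_countP_lt_listMedian_le {l : List ℝ} (hl : l ≠ []) :
    2 * l.countP (· < listMedian l) ≤ l.length := by
  obtain ⟨-, j, -, hj, -, hmed, -, hj2⟩ := exists_getElem_mergeSort_le_listMedian_le hl
  have hcount := List.countP_le_of_pairwise (p := (· < listMedian l))
    (List.pairwise_mergeSort' (fun a b : ℝ => a ≤ b) l)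
    (fun x y hxy hy => by simp only [decide_eq_true_eq] at *; linarith) hj (by simpa)
  rw [(List.mergeSort_perm l _).countP_eq] at hcount
  omega

theorem two_mul_countP_listMedian_lt_le {l : List ℝ} (hl : l ≠ []) :
    2 * l.countP (listMedian l < ·) ≤ l.length := by
  obtain ⟨i, -, hi, -, hmed, -, hi2, -⟩ := exists_getElem_mergeSort_le_listMedian_le hl
  have hs : (l.mergeSort (· ≤ ·)).length = l.length := List.length_mergeSort l
  have hcount := List.countP_le_of_pairwise (p := (listMedian l < ·))
    (List.pairwise_reverse.mpr (List.pairwise_mergeSort' (fun a b : ℝ => a ≤ b) l))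
    (fun x y hxy hy => by simp only [decide_eq_true_eq] at *; linarith)
    (j := l.length - 1 - i) (by simp; omega) (by
      simp only [List.getElem_reverse, decide_eq_true_eq, not_lt]
      exact (getElem_congr_idx (by omega)).trans_le hmed)
  rw [List.countP_reverse, (List.mergeSort_perm l _).countP_eq] at hcount
  omega

theorem card_filter_univ_eq_countP [Fintype ι] (f : ι → ℝ) (p : ℝ → Prop)
    [DecidablePred p] : #{i | p (f i)} = (univ.val.toList.map f).countP (p ·) := by
  rw [← Multiset.coe_countP, ← Multiset.map_coe, Multiset.coe_toList, Multiset.countP_map]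
  rfl

theorem two_mul_card_lt_sampleMedian_le [Fintype ι] [Nonempty ι] (f : ι → ℝ) :
    2 * #{i | f i < sampleMedian f} ≤ Fintype.card ι := by
  have hl : univ.val.toList.map f ≠ [] := by simp [Finset.univ_nonempty.ne_empty]
  rw [card_filter_univ_eq_countP f (· < sampleMedian f)]
  exact (two_mul_countP_lt_listMedian_le hl).trans_eq (by simp)

theorem two_mul_card_sampleMedian_lt_le [Fintype ι] [Nonempty ι] (f : ι → ℝ) :
    2 * #{i | sampleMedian f < f i} ≤ Fintype.card ι := by
  have hl : univ.val.toList.map f ≠ [] := by simp [Finset.univ_nonempty.ne_empty]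
  rw [card_filter_univ_eq_countP f (sampleMedian f < ·)]
  exact (two_mul_countP_listMedian_lt_le hl).trans_eq (by simp)

theorem sum_abs_sub_le_of_le_of_two_mul_card_lt_le {s : Finset ι} {f : ι → ℝ} {a c : ℝ}
    (hac : a ≤ c) (h : 2 * #{i ∈ s | a < f i} ≤ #s) :
    ∑ i ∈ s, |f i - a| ≤ ∑ i ∈ s, |f i - c| := by
  have hpoint : ∀ i ∈ s,
      (c - a) * (1 - 2 * if a < f i then 1 else 0) ≤ |f i - c| - |f i - a| := by
    intro i _
    split_ifs with hfi
    · have htri := abs_sub_abs_le_abs_sub (f i - a) (f i - c)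
      rw [show f i - a - (f i - c) = c - a by ring, abs_of_nonneg (sub_nonneg.mpr hac)] at htri
      linarith
    · rw [abs_of_nonpos (by linarith), abs_of_nonpos (by linarith)]
      linarith
  have hsum : ∑ i ∈ s, (c - a) * (1 - 2 * if a < f i then 1 else 0)
      = (c - a) * (#s - 2 * #{i ∈ s | a < f i}) := by
    rw [← mul_sum, sum_sub_distrib, ← mul_sum, natCast_card_filter]
    simp
  have hnonneg : 0 ≤ (c - a) * ((#s : ℝ) - 2 * #{i ∈ s | a < f i}) :=
    mul_nonneg (by linarith) (by rw [sub_nonneg]; exact_mod_cast h)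
  have hsum_le := sum_le_sum hpoint
  rw [hsum, sum_sub_distrib] at hsum_le
  linarith

theorem sum_abs_sub_le_of_two_mul_card_le {s : Finset ι} {f : ι → ℝ} {a : ℝ}
    (hlt : 2 * #{i ∈ s | f i < a} ≤ #s) (hgt : 2 * #{i ∈ s | a < f i} ≤ #s) (c : ℝ) :
    ∑ i ∈ s, |f i - a| ≤ ∑ i ∈ s, |f i - c| := by
  rcases le_total a c with hac | hca
  · exact sum_abs_sub_le_of_le_of_two_mul_card_lt_le hac hgt
  · have hneg := sum_abs_sub_le_of_le_of_two_mul_card_lt_le (f := -f) (neg_le_neg hca)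
      (by simpa using hlt)
    simp only [Pi.neg_apply, neg_sub_neg] at hneg
    simpa only [abs_sub_comm] using hneg

theorem sum_abs_sub_sampleMedian_le [Fintype ι] [Nonempty ι] (f : ι → ℝ) (c : ℝ) :
    ∑ i, |f i - sampleMedian f| ≤ ∑ i, |f i - c| :=
  sum_abs_sub_le_of_two_mul_card_le (two_mul_card_lt_sampleMedian_le f)
    (two_mul_card_sampleMedian_lt_le f) c

noncomputable def medianDeviation [Fintype ι] [Fintype κ] (δ : ι → κ → ℝ) : ℝ :=
  ∑ m, ∑ k, |δ m k - sampleMedian fun l => δ l k|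

theorem medianDeviation_le [Fintype ι] [Nonempty ι] [Fintype κ]
    (δ : ι → κ → ℝ) (c : κ → ℝ) : medianDeviation δ ≤ ∑ m, ∑ k, |δ m k - c k| := by
  unfold medianDeviation
  rw [sum_comm, sum_comm (γ := ι)]
  exact sum_le_sum fun k _ => sum_abs_sub_sampleMedian_le (δ · k) (c k)

theorem Matrix.transpose_mulVec_mulVec_eq_zero_iff {m n R : Type*} [Fintype m] [Fintype n]
    [Field R] [LinearOrder R] [IsStrictOrderedRing R] (A : Matrix m n R) (w : n → R) :
    Aᵀ *ᵥ (A *ᵥ w) = 0 ↔ A *ᵥ w = 0 := by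
  simpa only [LinearMap.mem_ker, mulVecLin_apply, ← mulVec_mulVec]
    using SetLike.ext_iff.mp (ker_mulVecLin_transpose_mul_self A) w

theorem pi_norm_le_sum_norm {E : ι → Type*} [Fintype ι] [∀ i, SeminormedAddCommGroup (E i)]
    (f : ∀ i, E i) : ‖f‖ ≤ ∑ i, ‖f i‖ :=
  (pi_norm_le_iff_of_nonneg (by positivity)).2 fun i =>
    single_le_sum (fun j _ => norm_nonneg (f j)) (mem_univ i)

open Filter in
theorem IsClosed.exists_isMinOn_of_norm_le {E : Type*} [NormedAddCommGroup E] [ProperSpace E]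
    {S : Set E} (hS : IsClosed S) (hne : S.Nonempty) {f : E → ℝ} (hf : Continuous f)
    (hnorm : ∀ x, ‖x‖ ≤ f x) : ∃ x ∈ S, IsMinOn f S x := by
  obtain ⟨x₀, hx₀⟩ := hne
  have hf_tendsto : Tendsto f (cocompact E) atTop :=
    tendsto_atTop_mono hnorm tendsto_norm_cocompact_atTop
  exact hf.continuousOn.exists_isMinOn' hS hx₀
    ((hf_tendsto.eventually_ge_atTop (f x₀)).filter_mono inf_le_left)

namespace MultitaskDantzig

variable [Fintype ρ] [Fintype κ] (X : ι → Matrix ρ κ ℝ) (β : ι → κ → ℝ)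

def Feasible (vs : κ → ℝ) (v : ι → κ → ℝ) : Prop :=
  ∀ m, (X m)ᵀ *ᵥ (X m *ᵥ (vs + v m) - X m *ᵥ β m) = 0

theorem feasible_iff {vs : κ → ℝ} {v : ι → κ → ℝ} :
    Feasible X β vs v ↔ ∀ m, X m *ᵥ (vs + v m - β m) = 0 := by
  simp only [Feasible, ← mulVec_sub, transpose_mulVec_mulVec_eq_zero_iff]

variable [Fintype ι] (βstar : κ → ℝ)

def l1Cost (v : ι → κ → ℝ) : ℝ :=
  ∑ m, ∑ k, |v m k|

def IsSolution (vs : κ → ℝ) (v : ι → κ → ℝ) : Prop :=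
  Feasible X β vs v ∧ ∀ ws w, Feasible X β ws w → l1Cost v ≤ l1Cost w

theorem continuous_l1Cost : Continuous (l1Cost : (ι → κ → ℝ) → ℝ) := by
  unfold l1Cost
  fun_prop

theorem norm_le_l1Cost (v : ι → κ → ℝ) : ‖v‖ ≤ l1Cost v :=
  (pi_norm_le_sum_norm v).trans <| sum_le_sum fun m _ => by
    simpa only [Real.norm_eq_abs] using pi_norm_le_sum_norm (v m)

theorem isClosed_setOf_exists_feasible : IsClosed {v | ∃ vs, Feasible X β vs v} := by
  let L : (κ → ℝ) × (ι → κ → ℝ) →ₗ[ℝ] ι → ρ → ℝ := LinearMap.pi fun m =>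
    (X m).mulVecLin ∘ₗ (LinearMap.fst ℝ _ _ + LinearMap.proj m ∘ₗ LinearMap.snd ℝ _ _)
  have hset : {v | ∃ vs, Feasible X β vs v}
      = (· - β) ⁻¹' ((LinearMap.ker L).map (LinearMap.snd ℝ _ _) : Set (ι → κ → ℝ)) := by
    ext v
    simp only [Set.mem_ofPred_eq, Set.mem_preimage, SetLike.mem_coe, Submodule.mem_map,
      LinearMap.mem_ker, Prod.exists, LinearMap.snd_apply, exists_eq_right, feasible_iff]
    refine exists_congr fun vs => ?_
    simp [L, funext_iff, add_sub_assoc]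
  rw [hset]
  exact (Submodule.closed_of_finiteDimensional _).preimage (continuous_sub_right β)

theorem exists_isSolution : ∃ vs v, IsSolution X β vs v := by
  have hβ : ∃ vs, Feasible X β vs β := ⟨0, (feasible_iff X β).2 fun m => by simp⟩
  obtain ⟨v, ⟨vs, hfeas⟩, hmin⟩ :=
    (isClosed_setOf_exists_feasible X β).exists_isMinOn_of_norm_le ⟨β, hβ⟩
      continuous_l1Cost norm_le_l1Cost
  exact ⟨vs, v, hfeas, fun ws w hw => hmin ⟨ws, hw⟩⟩

theorem medianDeviation_le_l1Cost [Nonempty ι] {vs : κ → ℝ} {v u : ι → κ → ℝ}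
    (hu : ∀ m, vs + v m = β m + u m) :
    medianDeviation (fun m k => β m k - βstar k + u m k) ≤ l1Cost v := by
  refine (medianDeviation_le _ (vs - βstar)).trans_eq
    (sum_congr rfl fun m _ => sum_congr rfl fun k _ => congrArg abs ?_)
  have hmk := congrFun (hu m) k
  simp only [Pi.add_apply, Pi.sub_apply] at hmk ⊢
  linarith

theorem exists_feasible_l1Cost_eq_medianDeviation {u : ι → κ → ℝ}
    (hu : ∀ m, X m *ᵥ u m = 0) :
    ∃ vs v, Feasible X β vs v ∧ (∀ m, vs + v m = β m + u m) ∧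
      l1Cost v = medianDeviation (fun m k => β m k - βstar k + u m k) := by
  let vs : κ → ℝ := fun k => βstar k + sampleMedian fun l => β l k - βstar k + u l k
  refine ⟨vs, fun m => β m + u m - vs, (feasible_iff X β).2 fun m => ?_,
    fun m => add_sub_cancel _ _, ?_⟩
  · simpa using hu m
  · refine sum_congr rfl fun m _ => sum_congr rfl fun k _ => congrArg abs ?_
    simp only [vs, Pi.add_apply, Pi.sub_apply]
    ring

theorem recovery_iff [Nonempty ι] :
    (∀ vs v, IsSolution X β vs v → ∀ m, vs + v m = β m) ↔
      ∀ u : ι → κ → ℝ, (∀ m, X m *ᵥ u m = 0) → u ≠ 0 →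
        medianDeviation (fun m k => β m k - βstar k)
          < medianDeviation (fun m k => β m k - βstar k + u m k) := by
  constructor
  · intro hrec u hu hne
    by_contra! hle
    obtain ⟨vs₀, v₀, hsol₀⟩ := exists_isSolution X β
    have hopt : medianDeviation (fun m k => β m k - βstar k) ≤ l1Cost v₀ := by
      simpa using medianDeviation_le_l1Cost β βstar (u := 0) (by simpa using hrec vs₀ v₀ hsol₀)
    obtain ⟨vs, v, hfeas, hvs, hcost⟩ := exists_feasible_l1Cost_eq_medianDeviation X β βstar hu
    have hsol : IsSolution X β vs v :=
      ⟨hfeas, fun ws w hw => hcost ▸ hle.trans (hopt.trans (hsol₀.2 ws w hw))⟩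
    exact hne (funext fun m => by simpa [hrec vs v hsol] using hvs m)
  · intro hF vs v hsol m
    by_contra hne
    set u : ι → κ → ℝ := fun m => vs + v m - β m
    have hu_ne : u ≠ 0 := fun h => hne (by simpa [u, sub_eq_zero] using congrFun h m)
    have hlt := hF u ((feasible_iff X β).1 hsol.1) hu_ne
    have hle := medianDeviation_le_l1Cost β βstar (vs := vs) (v := v) (u := u)
      fun m => by simp [u]
    obtain ⟨ws, w, hw, -, hw_cost⟩ :=
      exists_feasible_l1Cost_eq_medianDeviation X β βstar (u := 0) fun m => mulVec_zero _
    simp only [Pi.zero_apply, add_zero] at hw_cost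
    linarith [hsol.2 ws w hw]

end MultitaskDantzig

open Classical in
theorem multitask_dantzig_recovery_general
    {M n d : ℕ} (hM : 0 < M)
    (β : Fin M → Fin d → ℝ) (βstar : Fin d → ℝ)
    (X : Fin M → Matrix (Fin n) (Fin d) ℝ) :
    ((∀ (vs : Fin d → ℝ) (v : Fin M → Fin d → ℝ),
        (∀ m, (X m)ᵀ.mulVec ((X m).mulVec (vs + v m) - (X m).mulVec (β m)) = 0) →
        (∀ (ws : Fin d → ℝ) (w : Fin M → Fin d → ℝ),
          (∀ m, (X m)ᵀ.mulVec ((X m).mulVec (ws + w m) - (X m).mulVec (β m)) = 0) →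
          (∑ m, ∑ k, |v m k|) ≤ ∑ m, ∑ k, |w m k|) →
        ∀ m, vs + v m = β m)
      ↔
      (∀ u : Fin M → Fin d → ℝ, (∀ m, (X m).mulVec (u m) = 0) → u ≠ 0 →
        (∑ m, ∑ k,
            |β m k - βstar k - sampleMedian fun ℓ => β ℓ k - βstar k|)
          < ∑ m, ∑ k,
              |β m k - βstar k + u m k
                - sampleMedian fun ℓ => β ℓ k - βstar k + u ℓ k|)) := by
  have : Nonempty (Fin M) := ⟨⟨0, hM⟩⟩
  refine Iff.trans ?_ (MultitaskDantzig.recovery_iff X β βstar)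
  exact ⟨fun h vs v hsol => h vs v hsol.1 hsol.2,
    fun h vs v hfeas hmin => h vs v ⟨hfeas, hmin⟩⟩

open Classical in
/-- The multitask Dantzig selector (minimizing `Σ_m ‖v^m‖₁` subject to
`X^{m⊤}(X^m(v⋆ + v^m) - Y^m) = 0` with `Y^m = X^m β^m`) recovers
`β^m = v̂⋆ + v̂^m` for all `m` if and only if, for all `u^m ∈ null(X^m)`,
`Σ_m ‖δ^m + u^m - median({δ^ℓ + u^ℓ}_ℓ)‖₁` (coordinate-wise median,
`δ^m = β^m - β⋆`) is uniquely minimized at `u = 0`. -/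
theorem multitask_dantzig_recovery
    {M n d : ℕ} (hM : 0 < M)
    (β : Fin M → Fin d → ℝ) (βstar : Fin d → ℝ) (s : ℕ)
    (hsparse : ∀ m,
      (Finset.univ.filter fun k => β m k - βstar k ≠ 0).card ≤ s)
    (X : Fin M → Matrix (Fin n) (Fin d) ℝ) :
    ((∀ (vs : Fin d → ℝ) (v : Fin M → Fin d → ℝ),
        (∀ m, (X m)ᵀ.mulVec ((X m).mulVec (vs + v m) - (X m).mulVec (β m)) = 0) →
        (∀ (ws : Fin d → ℝ) (w : Fin M → Fin d → ℝ),
          (∀ m, (X m)ᵀ.mulVec ((X m).mulVec (ws + w m) - (X m).mulVec (β m)) = 0) →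
          (∑ m, ∑ k, |v m k|) ≤ ∑ m, ∑ k, |w m k|) →
        ∀ m, vs + v m = β m)
      ↔
      (∀ u : Fin M → Fin d → ℝ, (∀ m, (X m).mulVec (u m) = 0) → u ≠ 0 →
        (∑ m, ∑ k,
            |β m k - βstar k - sampleMedian fun ℓ => β ℓ k - βstar k|)
          < ∑ m, ∑ k,
              |β m k - βstar k + u m k
                - sampleMedian fun ℓ => β ℓ k - βstar k + u ℓ k|)) :=
  multitask_dantzig_recovery_general hM β βstar X
end
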